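/- Let X be an n-dimensional real normed space, Y ⊆ X a k-dimensional subspace with λ(Y,X) > 1. Then every Chalmers–Metcalf operator for Y is supported on at least three pairs; that is, there is no Chalmers–Metcalf operator of the form T = α x_1 ⊗ f_1 + (1−α) x_2 ⊗ f_2 with x_i ∈ ext B_X, f_i ∈ ext B_{X*}, α ∈ [0,1]. -/
import Mathlib


open Metric Module

noncomputable section

variable {X : Type*} [NormedAddCommGroup X] [NormedSpace ℝ X]

def IsProjOnto (Y : Submodule ℝ X) (P : X →L[ℝ] X) : Prop :=
  (∀ x, P x ∈ Y) ∧ ∀ y ∈ Y, P y = y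

def relProjConst (Y : Submodule ℝ X) : ℝ :=
  sInf {c | ∃ P : X →L[ℝ] X, IsProjOnto Y P ∧ ‖P‖ = c}

def MinProjSet (Y : Submodule ℝ X) : Set (X →L[ℝ] X) :=
  {P | IsProjOnto Y P ∧ ‖P‖ = relProjConst Y}

/-- `∑ i, α i • (x i ⊗ f i)` is a Chalmers–Metcalf operator for `Y`: the weights `α i`
are positive and sum to `1`, the `x i` (resp. `f i`) are extreme points of the unit
ball of `X` (resp. of `X*`), `Y` is invariant under the operator, and each `(x i, f i)`
is a norming pair for a minimal projection onto `Y`. -/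
def IsCM (Y : Submodule ℝ X) {l : ℕ} (α : Fin l → ℝ) (x : Fin l → X)
    (f : Fin l → (X →L[ℝ] ℝ)) : Prop :=
  (∀ i, 0 < α i) ∧ ∑ i, α i = 1 ∧
  (∀ i, x i ∈ Set.extremePoints ℝ (closedBall (0 : X) 1)) ∧
  (∀ i, f i ∈ Set.extremePoints ℝ (closedBall (0 : X →L[ℝ] ℝ) 1)) ∧
  (∀ y ∈ Y, (∑ i, α i • f i y • x i) ∈ Y) ∧
  ∃ P₀ ∈ MinProjSet Y, ∀ i, f i (P₀ (x i)) = relProjConst Y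

/-- Pure scalar contradiction extracted from the `l = 2` case. -/
lemma cm_two_aux {L a b A0 A1 t1 t2 F0 G1 : ℝ} (hL1 : 1 < L)
    (hA0 : 0 < A0) (hA1 : 0 < A1) (ha : a ≠ 0) (hb : b ≠ 0)
    (e1 : b * (A0 * L) = a * (A1 * t2)) (e2 : b * (A0 * t1) = a * (A1 * L))
    (ht1 : t1^2 ≤ L^2) (ht2 : t2^2 ≤ L^2)
    (e3 : a * F0 + b * G1 = a * t2 + b * L)
    (hF0 : |F0| ≤ 1) (hG1 : |G1| ≤ 1) : False := by
  have ha2 : (0:ℝ) < a^2 := by positivity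
  have hb2 : (0:ℝ) < b^2 := by positivity
  have hLpos : (0:ℝ) < L := by linarith
  have hL2 : (0:ℝ) < L^2 := by positivity
  have e1sq : (b * (A0 * L))^2 = (a * (A1 * t2))^2 := by rw [e1]
  have e2sq : (b * (A0 * t1))^2 = (a * (A1 * L))^2 := by rw [e2]
  have hF1 : (b^2*A0^2) * L^2 = (a^2*A1^2) * t2^2 := by linear_combination e1sq
  have hF2 : (a^2*A1^2) * t2^2 ≤ (a^2*A1^2) * L^2 :=
    mul_le_mul_of_nonneg_left ht2 (by positivity)
  have hle1 : b^2*A0^2 ≤ a^2*A1^2 := le_of_mul_le_mul_right (by linarith) hL2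
  have hG1' : (a^2*A1^2) * L^2 = (b^2*A0^2) * t1^2 := by linear_combination -e2sq
  have hG2 : (b^2*A0^2) * t1^2 ≤ (b^2*A0^2) * L^2 :=
    mul_le_mul_of_nonneg_left ht1 (by positivity)
  have hle2 : a^2*A1^2 ≤ b^2*A0^2 := le_of_mul_le_mul_right (by linarith) hL2
  have hAB : a^2*A1^2 = b^2*A0^2 := le_antisymm hle2 hle1
  have h6 : (0:ℝ) < a^2*A1^2 := by positivity
  have ht2sq : t2^2 = L^2 := by
    have h5 : (a^2*A1^2) * t2^2 = (a^2*A1^2) * L^2 := by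
      linear_combination -hF1 - L^2 * hAB
    exact mul_left_cancel₀ (ne_of_gt h6) h5
  have hG1le : G1 ≤ 1 := le_trans (le_abs_self _) hG1
  have habW : 0 < a*b*(F0 - t2) := by
    have h7 : a*b*(F0 - t2) = b^2*(L - G1) := by linear_combination b * e3
    rw [h7]
    have : 0 < L - G1 := by linarith
    positivity
  have habt : 0 < a*b*t2 := by
    have h8 : (a*b*t2)*(a^2*A1) = a^2*b^2*(A0 * L) := by
      linear_combination (-(a^2*b)) * e1
    have h9 : 0 < (a*b*t2)*(a^2*A1) := by rw [h8]; positivity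
    have h10 : (0:ℝ) < a^2*A1 := by positivity
    rcases mul_pos_iff.mp h9 with ⟨h, _⟩ | ⟨_, h⟩
    · exact h
    · linarith
  have htW : 0 < t2 * (F0 - t2) := by
    have h12 : 0 < (a*b)^2*(t2*(F0 - t2)) := by
      rw [show (a*b)^2*(t2*(F0 - t2)) = (a*b*t2)*(a*b*(F0 - t2)) from by ring]
      exact mul_pos habt habW
    rcases mul_pos_iff.mp h12 with ⟨_, h⟩ | ⟨h, _⟩
    · exact h
    · nlinarith [sq_nonneg (a*b)]
  have hF0sq : F0^2 ≤ 1 := by nlinarith [abs_nonneg F0, sq_abs F0]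
  have hfin : F0^2 = L^2 + 2*(t2*(F0 - t2)) + (F0 - t2)^2 := by
    linear_combination ht2sq
  have hL2' : (1:ℝ) < L^2 := one_lt_pow₀ hL1 (by norm_num)
  linarith [sq_nonneg (F0 - t2)]


/-- If `λ(Y, X) > 1` then every Chalmers–Metcalf operator for `Y` is supported on at
least three pairs; in particular there is no Chalmers–Metcalf operator of the form
`α x₁ ⊗ f₁ + (1 - α) x₂ ⊗ f₂` with `α ∈ [0, 1]`. -/
theorem cm_support_at_least_three [FiniteDimensional ℝ X] {n k : ℕ}
    (hn : finrank ℝ X = n) (Y : Submodule ℝ X) (hk : finrank ℝ Y = k)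
    (hk1 : 1 ≤ k) (hkn : k ≤ n - 1) (hlam : 1 < relProjConst Y) :
    ∀ (l : ℕ) (α : Fin l → ℝ) (x : Fin l → X) (f : Fin l → (X →L[ℝ] ℝ)),
      IsCM Y α x f → 3 ≤ l := by
  intro l α x f hcm
  by_contra hlt
  push_neg at hlt
  obtain ⟨hα, hsum, hx, hf, hinv, P₀, ⟨⟨hPmem, hPid⟩, hPnorm⟩, hnormP⟩ := hcm
  set L := relProjConst Y with hLdef
  have hL1 : (1 : ℝ) < L := hlam
  -- norm bounds from extreme points
  have hxn : ∀ i, ‖x i‖ ≤ 1 := fun i => by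
    have := extremePoints_subset (hx i)
    simpa [mem_closedBall_zero_iff] using this
  have hfn : ∀ i, ‖f i‖ ≤ 1 := fun i => by
    have := extremePoints_subset (hf i)
    simpa [mem_closedBall_zero_iff] using this
  -- |f i u| ≤ 1 when ‖u‖ ≤ 1
  have hfb : ∀ i j, |f i (x j)| ≤ 1 := by
    intro i j
    have h1 := (f i).le_opNorm (x j)
    have h2 : (0:ℝ) ≤ ‖f i‖ := norm_nonneg _
    rw [Real.norm_eq_abs] at h1
    nlinarith [hfn i, hxn j, norm_nonneg (x j)]
  -- bound on images under P₀
  have hzb : ∀ i j, |f i (P₀ (x j))| ≤ L := by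
    intro i j
    have h1 := (f i).le_opNorm (P₀ (x j))
    rw [Real.norm_eq_abs] at h1
    have h2 := P₀.le_opNorm (x j)
    rw [hPnorm] at h2
    have h3 : ‖P₀ (x j)‖ ≤ L := by nlinarith [hxn j, hL1]
    nlinarith [hfn i, norm_nonneg (P₀ (x j)), abs_nonneg (f i (P₀ (x j)))]
  -- if some x i ∈ Y, contradiction
  have hxY : ∀ i, x i ∉ Y := by
    intro i hiY
    have h1 := hnormP i
    rw [hPid _ hiY] at h1
    have := hfb i i
    rw [h1] at this
    have : L ≤ 1 := le_trans (le_abs_self L) this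
    linarith
  -- scalar-multiple membership lemma
  have key : ∀ (c : ℝ) (i : Fin l), c • x i ∈ Y → c = 0 := by
    intro c i hc
    by_contra hc0
    exact hxY i (by
      have := Y.smul_mem c⁻¹ hc
      rwa [inv_smul_smul₀ hc0] at this)
  interval_cases l
  · simp at hsum
  · -- l = 1
    have hy := hinv (P₀ (x 0)) (hPmem _)
    rw [Fin.sum_univ_one] at hy
    rw [smul_smul] at hy
    have := key _ _ hy
    have h1 := hnormP 0
    have hα0 := hα 0
    have : f 0 (P₀ (x 0)) = 0 := by
      rcases mul_eq_zero.mp this with h | h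
      · linarith
      · exact h
    rw [h1] at this
    linarith
  · -- l = 2
    by_cases hex : ∃ a b : ℝ, (a ≠ 0 ∨ b ≠ 0) ∧ a • x 0 + b • x 1 ∈ Y
    · obtain ⟨a, b, hab, hv⟩ := hex
      -- both a and b nonzero
      have ha : a ≠ 0 := by
        intro ha0
        subst ha0
        simp only [zero_smul, zero_add] at hv
        have hb : b ≠ 0 := by tauto
        exact hb (key b 1 hv)
      have hb : b ≠ 0 := by
        intro hb0
        subst hb0
        simp only [zero_smul, add_zero] at hv
        exact ha (key a 0 hv)
      -- key relation on Y
      have hrel : ∀ y ∈ Y, b * (α 0 * f 0 y) = a * (α 1 * f 1 y) := by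
        intro y hy
        have h1 := hinv y hy
        rw [Fin.sum_univ_two, smul_smul, smul_smul] at h1
        have h2 := Y.sub_mem h1 (Y.smul_mem ((α 1 * f 1 y)/b) hv)
        have hveq : ((α 0 * f 0 y) • x 0 + (α 1 * f 1 y) • x 1)
            - ((α 1 * f 1 y)/b) • (a • x 0 + b • x 1)
            = ((α 0 * f 0 y) - a/b*(α 1 * f 1 y)) • x 0 := by
          match_scalars <;> field_simp <;> ring
        rw [hveq] at h2
        have h3 := key _ _ h2
        have h4 : α 0 * f 0 y = a/b*(α 1 * f 1 y) := by linarith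
        field_simp at h4
        linarith
      set z0 := P₀ (x 0) with hz0
      set z1 := P₀ (x 1) with hz1
      set θ₁ := f 0 z1 with hθ₁
      set θ₂ := f 1 z0 with hθ₂
      have e1 : b * (α 0 * L) = a * (α 1 * θ₂) := by
        have := hrel z0 (hPmem _)
        rwa [hnormP 0] at this
      have e2 : b * (α 0 * θ₁) = a * (α 1 * L) := by
        have := hrel z1 (hPmem _)
        rwa [hnormP 1] at this
      have hθ₁b : θ₁^2 ≤ L^2 := by
        have := hzb 0 1
        nlinarith [abs_nonneg θ₁, sq_abs θ₁]
      have hθ₂b : θ₂^2 ≤ L^2 := by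
        have := hzb 1 0
        nlinarith [abs_nonneg θ₂, sq_abs θ₂]
      have hα0 := hα 0
      have hα1 := hα 1
      -- vector identity from P₀ v = v
      have hPv : P₀ (a • x 0 + b • x 1) = a • x 0 + b • x 1 := hPid _ hv
      have hveq2 : a • x 0 + b • x 1 = a • z0 + b • z1 := by
        rw [← hPv, map_add, map_smul, map_smul]
      have e3 : a * f 1 (x 0) + b * f 1 (x 1) = a * θ₂ + b * L := by
        have h13 := congrArg (f 1) hveq2
        rw [map_add, map_add, map_smul, map_smul, map_smul, map_smul] at h13
        simp only [smul_eq_mul] at h13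
        rw [hnormP 1] at h13
        exact h13
      exact cm_two_aux hL1 hα0 hα1 ha hb e1 e2 hθ₁b hθ₂b e3 (hfb 1 0) (hfb 1 1)
    · push_neg at hex
      have h1 := hinv (P₀ (x 0)) (hPmem _)
      rw [Fin.sum_univ_two, smul_smul, smul_smul] at h1
      have h2 := hex (α 0 * f 0 (P₀ (x 0))) (α 1 * f 1 (P₀ (x 0)))
      have h3 : α 0 * f 0 (P₀ (x 0)) = 0 := by
        by_contra h4
        exact h2 (Or.inl h4) h1
      have h5 := hnormP 0
      have hα0 := hα 0
      rw [h5] at h3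
      rcases mul_eq_zero.mp h3 with h | h
      · linarith
      · linarith
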